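/- Let k ≥ 1 be an integer and let t > 0 be real. Then |R̃_{k+1}(t)| < η_k · √(πk) · T̃_k(t), where η_k := 1/(1 − 2^{1−2k}). -/

import Mathlib

open MeasureTheory Real

/-- The factor `η_k = 1 / (1 - 2 ^ (1 - 2k))`. -/
noncomputable def eta (k : ℕ) : ℝ := 1 / (1 - (2 : ℝ) ^ ((1 : ℤ) - 2 * k))

/-- The `j`-th term of the asymptotic series for the Riemann–Siegel theta function. -/
noncomputable def Ttilde (j : ℕ) (t : ℝ) : ℝ :=
  |(Polynomial.aeval ((1 : ℝ) / 2) (Polynomial.bernoulli (2 * j)) : ℝ)| /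
    ((4 * (j : ℝ)) * (2 * (j : ℝ) - 1) * t ^ (2 * j - 1))

/-- `Rtildenext k t` is the remainder `R̃_{k+1}(t)` after `k` terms of the series for `ϑ(t)`. -/
noncomputable def Rtildenext (k : ℕ) (t : ℝ) : ℝ :=
  (-∫ u in Set.Ioi (0 : ℝ),
      ((Polynomial.aeval (Int.fract (u + 1 / 2)) (Polynomial.bernoulli (2 * k)) : ℝ) : ℂ) /
        ((4 * (k : ℂ)) * ((u : ℂ) + Complex.I * t) ^ (2 * k))).im

/-- `Rtilde k t` is the remainder `R̃_k(t)` after `k - 1` terms of the series for `ϑ(t)`. -/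
noncomputable def Rtilde (k : ℕ) (t : ℝ) : ℝ := Ttilde k t + Rtildenext k t

open Set Filter
open scoped Nat

noncomputable def Pw (n : ℕ) : ℝ := ∏ i ∈ Finset.range n, (2*i+1)/(2*i+2)

lemma Pw_succ (n : ℕ) : Pw (n+1) = Pw n * ((2*n+1)/(2*n+2)) := Finset.prod_range_succ _ _

lemma Pw_pos (n : ℕ) : 0 < Pw n := Finset.prod_pos (fun i _ => by positivity)

lemma W_mul_Pw (n : ℕ) : Real.Wallis.W n * ((2*n+1) * Pw n ^ 2) = 1 := by
  induction n with
  | zero => simp [Real.Wallis.W, Pw]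
  | succ n ih =>
    rw [Real.Wallis.W_succ, Pw_succ]
    have h1 : (2*(n:ℝ)+1) ≠ 0 := by positivity
    have h2 : (2*(n:ℝ)+2) ≠ 0 := by positivity
    have h3 : (2*(n:ℝ)+3) ≠ 0 := by positivity
    push_cast
    field_simp
    linear_combination (2*(n:ℝ)+3) * ih

lemma d_lt_one (n : ℕ) : π * (4*n+1) * Pw n ^ 2 / 4 < 1 := by
  set d : ℕ → ℝ := fun n => π * (4*n+1) * Pw n ^ 2 / 4 with hd
  have hmono : StrictMono d := by
    apply strictMono_nat_of_lt_succ
    intro m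
    have hp := Pw_pos m
    have h2 : (0:ℝ) < 2*m+2 := by positivity
    simp only [hd, Pw_succ]
    push_cast
    rw [div_lt_div_iff₀ (by norm_num) (by norm_num)]
    have key : ((4:ℝ)*m+1) * (2*m+2)^2 < (4*m+5) * (2*m+1)^2 := by nlinarith [sq_nonneg ((m:ℝ))]
    have hpi := Real.pi_pos
    calc π * (4*↑m+1) * Pw m ^ 2 * 4
        = (π * Pw m ^2 / (2*↑m+2)^2 * 4) * ((4*↑m+1) * (2*↑m+2)^2) := by field_simp
      _ < (π * Pw m ^2 / (2*↑m+2)^2 * 4) * ((4*↑m+5) * (2*↑m+1)^2) := by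
          apply mul_lt_mul_of_pos_left key; positivity
      _ = π * (4*(↑m+1)+1) * (Pw m * ((2*↑m+1)/(2*↑m+2))) ^ 2 * 4 := by field_simp; ring
  have htends : Tendsto d atTop (nhds 1) := by
    have hW := Real.Wallis.tendsto_W_nhds_pi_div_two
    have hWne : (π/2 : ℝ) ≠ 0 := by positivity
    have h1 : Tendsto (fun n : ℕ => (Real.Wallis.W n)⁻¹) atTop (nhds (π/2)⁻¹) := hW.inv₀ hWne
    have h2 : Tendsto (fun n : ℕ => (1:ℝ)/(2*n+1)) atTop (nhds 0) := by
      apply squeeze_zero (fun n => by positivity) (g := fun n : ℕ => 1/((n:ℝ)+1))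
      · intro n
        apply div_le_div_of_nonneg_left (by norm_num) (by positivity)
        push_cast; linarith [Nat.cast_nonneg (α := ℝ) n]
      · exact tendsto_one_div_add_atTop_nhds_zero_nat
    have h3 : Tendsto (fun n : ℕ => (π/4) * (2 - 1/(2*(n:ℝ)+1)) * (Real.Wallis.W n)⁻¹)
        atTop (nhds ((π/4) * (2 - 0) * (π/2)⁻¹)) :=
      (((tendsto_const_nhds.sub h2).const_mul (π/4)).mul h1)
    have heq : ∀ n : ℕ, (π/4) * (2 - 1/(2*(n:ℝ)+1)) * (Real.Wallis.W n)⁻¹ = d n := by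
      intro n
      have hWp := Real.Wallis.W_pos n
      have hPw := W_mul_Pw n
      have h1 : (2*(n:ℝ)+1) ≠ 0 := by positivity
      have : Pw n ^ 2 = ((2*(n:ℝ)+1) * Real.Wallis.W n)⁻¹ := by
        field_simp at hPw ⊢; linarith [hPw]
      simp only [hd, this]
      field_simp
      ring
    have : ((π/4) * (2 - 0) * (π/2)⁻¹ : ℝ) = 1 := by field_simp; ring
    rw [this] at h3
    exact h3.congr heq
  have := hmono.monotone.ge_of_tendsto htends (n+1)
  calc d n < d (n+1) := hmono (Nat.lt_succ_self n)
    _ ≤ 1 := this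

lemma key_ineq (k : ℕ) (hk : 1 ≤ k) :
    (2*(k:ℝ)-1) * (π/2 * Pw (k-1)) < Real.sqrt (π * k) := by
  obtain ⟨n, rfl⟩ : ∃ n, k = n + 1 := ⟨k-1, (Nat.succ_pred_eq_of_pos hk).symm⟩
  simp only [Nat.add_sub_cancel]
  have hd := d_lt_one n
  have hp := Pw_pos n
  have hpi := Real.pi_pos
  have h5 : π*(4*(n:ℝ)+1)*Pw n^2 < 4 := by
    rw [div_lt_one (by norm_num)] at hd; linarith
  have he : (2*(((n+1:ℕ)):ℝ)-1) = 2*(n:ℝ)+1 := by push_cast; ring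
  rw [he, show ((n+1 : ℕ):ℝ) = (n:ℝ)+1 by push_cast; ring]
  rw [Real.lt_sqrt (by positivity)]
  nlinarith [mul_lt_mul_of_pos_left h5 (mul_pos hpi (show (0:ℝ) < (2*(n:ℝ)+1)^2 by positivity)),
    sq_nonneg ((n:ℝ)), mul_pos hpi (pow_pos hp 2)]



lemma gcont (k : ℕ) (t : ℝ) (ht : 0 < t) : Continuous (fun u : ℝ => ((u^2+t^2)^k)⁻¹) :=
  (((continuous_pow 2).add continuous_const).pow k).inv₀ (fun u => show ((u^2+t^2)^k) ≠ 0 by positivity)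

lemma gt_int (k : ℕ) (hk : 1 ≤ k) (t : ℝ) (ht : 0 < t) :
    IntegrableOn (fun u : ℝ => ((u^2+t^2)^k)⁻¹) (Ioi 0) := by
  obtain ⟨j, rfl⟩ : ∃ j, k = j + 1 := ⟨k-1, (Nat.succ_pred_eq_of_pos hk).symm⟩
  set C : ℝ := (t^(2*j) * min 1 (t^2))⁻¹ with hC
  have hCpos : 0 < C := by
    rw [hC]; apply inv_pos.mpr; apply mul_pos (by positivity) (lt_min one_pos (by positivity))
  apply Integrable.mono' ((integrable_inv_one_add_sq.const_mul C).integrableOn)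
    ((gcont (j+1) t ht).aestronglyMeasurable.restrict)
  filter_upwards with u
  rw [Real.norm_eq_abs, abs_of_nonneg (by positivity)]
  have h1 : t^(2*j) * min 1 (t^2) * (1+u^2) ≤ (u^2+t^2)^(j+1) := by
    have hmin : min 1 (t^2) * (1+u^2) ≤ u^2+t^2 := by
      rcases min_le_iff.mp (le_refl (min 1 (t^2))) with h | h
      · cases le_total (1:ℝ) (t^2) with
        | inl hle => rw [min_eq_left hle]; nlinarith
        | inr hle => rw [min_eq_right hle]; nlinarith [sq_nonneg u]
      · cases le_total (1:ℝ) (t^2) with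
        | inl hle => rw [min_eq_left hle]; nlinarith
        | inr hle => rw [min_eq_right hle]; nlinarith [sq_nonneg u]
    have h2 : t^(2*j) ≤ (u^2+t^2)^j := by
      rw [pow_mul]
      exact pow_le_pow_left₀ (by positivity) (by nlinarith [sq_nonneg u]) j
    calc t^(2*j) * min 1 (t^2) * (1+u^2) ≤ (u^2+t^2)^j * (min 1 (t^2) * (1+u^2)) := by
          rw [mul_assoc]
          apply mul_le_mul_of_nonneg_right h2
          positivity
      _ ≤ (u^2+t^2)^j * (u^2+t^2) := by
          apply mul_le_mul_of_nonneg_left hmin (by positivity)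
      _ = (u^2+t^2)^(j+1) := (pow_succ _ _).symm
  have hXpos : (0:ℝ) < t^(2*j) * min 1 (t^2) * (1+u^2) :=
    mul_pos (mul_pos (by positivity) (lt_min one_pos (by positivity))) (by positivity)
  calc ((u^2+t^2)^(j+1))⁻¹ ≤ (t^(2*j) * min 1 (t^2) * (1+u^2))⁻¹ := inv_anti₀ hXpos h1
    _ = C * (1+u^2)⁻¹ := by rw [hC, mul_inv]

lemma g_int (k : ℕ) (hk : 1 ≤ k) :
    IntegrableOn (fun u : ℝ => ((u^2+1)^k)⁻¹) (Ioi 0) := by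
  have := gt_int k hk 1 one_pos
  simpa using this

lemma g_val (m : ℕ) : ∫ u in Ioi (0:ℝ), ((u^2+1)^(m+1))⁻¹ = π/2 * Pw m := by
  induction m with
  | zero =>
    simp only [pow_one, Pw, Finset.range_zero, Finset.prod_empty, mul_one]
    rw [show (fun u : ℝ => ((u^2+1)^1)⁻¹) = fun u : ℝ => ((1+u^2))⁻¹ by
      funext u; rw [pow_one, add_comm]]
    rw [integral_Ioi_inv_one_add_sq, Real.arctan_zero, sub_zero]
  | succ m ih =>
    -- integration by parts identity
    have hint1 := g_int (m+1) (by omega)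
    have hint2 := g_int (m+2) (by omega)
    have hderiv : ∀ x : ℝ, HasDerivAt (fun u : ℝ => u * ((u^2+1)^(m+1))⁻¹)
        ((-(2*(m:ℝ)+1)) * ((x^2+1)^(m+1))⁻¹ + (2*(m:ℝ)+2) * ((x^2+1)^(m+2))⁻¹) x := by
      intro x
      have hq : HasDerivAt (fun u : ℝ => u^2+1) (2*x) x := by
        simpa using (hasDerivAt_pow 2 x).add_const 1
      have hne : ((x:ℝ)^2+1)^(m+1) ≠ 0 := by positivity
      have hpow : HasDerivAt (fun u : ℝ => (u^2+1)^(m+1))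
          ((m+1 : ℕ) * (x^2+1)^m * (2*x)) x := by
        simpa using hq.fun_pow (m+1)
      have hinv := hpow.fun_inv hne
      have hmul : HasDerivAt (fun u : ℝ => u * ((u^2+1)^(m+1))⁻¹) _ x := (hasDerivAt_id x).fun_mul hinv
      convert hmul using 1
      have hxne : ((x:ℝ)^2+1) ≠ 0 := by positivity
      simp only [id_eq, Nat.cast_add, Nat.cast_one]
      field_simp
      ring
    have htend : Tendsto (fun u : ℝ => u * ((u^2+1)^(m+1))⁻¹) atTop (nhds 0) := by
      apply tendsto_of_tendsto_of_tendsto_of_le_of_le' tendsto_const_nhds tendsto_inv_atTop_zero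
      · filter_upwards [eventually_ge_atTop (1:ℝ)] with u hu
        positivity
      · filter_upwards [eventually_ge_atTop (1:ℝ)] with u hu
        have h1 : (u:ℝ)^2 ≤ (u^2+1)^(m+1) := by
          calc (u:ℝ)^2 ≤ u^2+1 := by linarith
            _ ≤ (u^2+1)^(m+1) := le_self_pow₀ (by nlinarith) (by omega)
        have hu2 : (0:ℝ) < u^2 := by nlinarith
        have hstep : ((u^2+1)^(m+1))⁻¹ ≤ (u^2)⁻¹ := inv_anti₀ hu2 h1
        calc u * ((u^2+1)^(m+1))⁻¹ ≤ u * (u^2)⁻¹ :=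
              mul_le_mul_of_nonneg_left hstep (by linarith)
          _ = u⁻¹ := by field_simp [pow_two]
    have hfint : IntegrableOn (fun x : ℝ =>
        (-(2*(m:ℝ)+1)) * ((x^2+1)^(m+1))⁻¹ + (2*(m:ℝ)+2) * ((x^2+1)^(m+2))⁻¹) (Ioi 0) :=
      (hint1.const_mul _).add (hint2.const_mul _)
    have heq := integral_Ioi_of_hasDerivAt_of_tendsto' (f := fun u : ℝ => u * ((u^2+1)^(m+1))⁻¹)
      (fun x _ => hderiv x) hfint htend
    rw [integral_add (hint1.const_mul _) (hint2.const_mul _), integral_const_mul,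
      integral_const_mul] at heq
    simp only [zero_mul, sub_zero, mul_zero] at heq
    rw [ih] at heq
    have h2 : (2*(m:ℝ)+2) ≠ 0 := by positivity
    have : ∫ u in Ioi (0:ℝ), ((u^2+1)^(m+2))⁻¹ = (2*(m:ℝ)+1)/(2*(m:ℝ)+2) * (π/2 * Pw m) := by
      field_simp at heq ⊢
      linarith [heq]
    rw [show m+1+1 = m+2 by ring] at *
    rw [this, Pw_succ]
    push_cast
    ring

lemma g_scaled (k : ℕ) (hk : 1 ≤ k) (t : ℝ) (ht : 0 < t) :
    ∫ u in Ioi (0:ℝ), ((u^2+t^2)^k)⁻¹ = (π/2 * Pw (k-1)) * t / t^(2*k) := by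
  have ht2k : (0:ℝ) < t^(2*k) := by positivity
  have hfun : (fun u : ℝ => ((u^2+t^2)^k)⁻¹)
      = fun u : ℝ => (t^(2*k))⁻¹ * (((t⁻¹*u)^2+1)^k)⁻¹ := by
    funext u
    have h1 : ((t⁻¹*u)^2+1) = (u^2+t^2)/t^2 := by
      field_simp
    have h2 : ((u^2+t^2)/t^2)^k = (u^2+t^2)^k / t^(2*k) := by
      rw [div_pow, ← pow_mul]
    rw [h1, h2, div_eq_mul_inv, mul_inv, inv_inv, ← mul_assoc, mul_comm, ← mul_assoc,
      mul_inv_cancel₀ ht2k.ne', one_mul]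
  rw [hfun]
  rw [MeasureTheory.integral_const_mul]
  have hcomp := MeasureTheory.integral_comp_mul_left_Ioi
    (fun u : ℝ => ((u^2+1)^k)⁻¹) 0 (inv_pos.mpr ht)
  simp only [mul_zero] at hcomp
  rw [hcomp, inv_inv, smul_eq_mul]
  obtain ⟨m, rfl⟩ : ∃ m, k = m + 1 := ⟨k-1, (Nat.succ_pred_eq_of_pos hk).symm⟩
  rw [g_val m]
  simp only [Nat.add_sub_cancel]
  ring


lemma bern_bound_and_half (k : ℕ) (hk : 1 ≤ k) :
    ∃ S : ℝ, 0 < S ∧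
      (∀ x ∈ Icc (0:ℝ) 1, |bernoulliFun (2*k) x| ≤ S) ∧
      |bernoulliFun (2*k) (1/2)| = (1 - (2:ℝ)^((1:ℤ)-2*k)) * S := by
  have hkne : k ≠ 0 := by omega
  set c : ℝ := (2*π)^(2*k)/2/(2*k)! with hc
  have hfac : (0:ℝ) < (2*k)! := by exact_mod_cast Nat.factorial_pos (2*k)
  have hcpos : 0 < c := by
    rw [hc]; apply div_pos (div_pos (by positivity) two_pos) hfac
  set f : ℕ → ℝ := fun n => 1/(n:ℝ)^(2*k) with hf
  have hsum : ∀ x ∈ Icc (0:ℝ) 1,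
      HasSum (fun n : ℕ => f n * Real.cos (2*π*n*x)) ((-1:ℝ)^(k+1) * (c * bernoulliFun (2*k) x)) := by
    intro x hx
    have := hasSum_one_div_nat_pow_mul_cos hkne hx
    rw [show ((-1:ℝ)^(k+1) * (2*π)^(2*k)/2/(2*k)! *
        (Polynomial.map (algebraMap ℚ ℝ) (Polynomial.bernoulli (2*k))).eval x)
        = (-1:ℝ)^(k+1) * (c * bernoulliFun (2*k) x) by rw [hc, bernoulliFun]; ring] at this
    exact this
  -- the sum at x = 0
  have hZ : HasSum f ((-1:ℝ)^(k+1) * (c * bernoulliFun (2*k) 0)) := by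
    have := hsum 0 (left_mem_Icc.mpr zero_le_one)
    simpa using this
  set Z : ℝ := (-1:ℝ)^(k+1) * (c * bernoulliFun (2*k) 0) with hZdef
  have hZ1 : 1 ≤ Z := by
    have := le_hasSum hZ 1 (fun j _ => by positivity)
    simpa [hf] using this
  have habs : ∀ x ∈ Icc (0:ℝ) 1, c * |bernoulliFun (2*k) x| ≤ Z := by
    intro x hx
    have hx' := hsum x hx
    have h1 : (-1:ℝ)^(k+1) * (c * bernoulliFun (2*k) x) ≤ Z :=
      hasSum_le (fun n => by
        have : f n * Real.cos (2*π*n*x) ≤ f n * 1 :=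
          mul_le_mul_of_nonneg_left (Real.cos_le_one _) (by positivity)
        simpa using this) hx' hZ
    have h2 : -Z ≤ (-1:ℝ)^(k+1) * (c * bernoulliFun (2*k) x) :=
      hasSum_le (fun n => by
        have : f n * (-1) ≤ f n * Real.cos (2*π*n*x) :=
          mul_le_mul_of_nonneg_left (Real.neg_one_le_cos _) (by positivity)
        simpa using this) hZ.neg hx'
    have habs1 : |(-1:ℝ)^(k+1) * (c * bernoulliFun (2*k) x)| ≤ Z := abs_le.mpr ⟨h2, h1⟩
    rwa [abs_mul, abs_pow, abs_neg, abs_one, one_pow, one_mul, abs_mul,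
      abs_of_pos hcpos] at habs1
  -- the sum at x = 1/2
  have hA : HasSum (fun n : ℕ => f n * (-1:ℝ)^n)
      ((-1:ℝ)^(k+1) * (c * bernoulliFun (2*k) (1/2))) := by
    have := hsum (1/2) (by constructor <;> norm_num)
    have hcos : ∀ n : ℕ, Real.cos (2*π*n*(1/2)) = (-1:ℝ)^n := by
      intro n
      rw [show (2*π*n*(1/2) : ℝ) = n*π - 0 by ring, Real.cos_nat_mul_pi_sub, Real.cos_zero,
        mul_one]
    simpa only [hcos] using this
  set A : ℝ := (-1:ℝ)^(k+1) * (c * bernoulliFun (2*k) (1/2)) with hAdef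
  have hZA : Z + A = Z * 2 / 2^(2*k) := by
    have hadd : HasSum (fun n : ℕ => f n + f n * (-1:ℝ)^n) (Z + A) := hZ.add hA
    have hdouble : HasSum (fun m : ℕ => f m * 2 / 2^(2*k)) (Z * 2 / 2^(2*k)) :=
      (hZ.mul_right 2).div_const _
    have hinj : Function.Injective (fun m : ℕ => 2*m) := fun a b h => by dsimp at h; omega
    have hvanish : ∀ n ∉ Set.range (fun m : ℕ => 2*m), f n + f n * (-1:ℝ)^n = 0 := by
      intro n hn
      have hodd : Odd n := by
        rcases Nat.even_or_odd n with he | ho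
        · exfalso; apply hn; obtain ⟨r, hr⟩ := he; exact ⟨r, by show 2*r = n; omega⟩
        · exact ho
      rw [hodd.neg_one_pow]
      ring
    have hcomp : ((fun n : ℕ => f n + f n * (-1:ℝ)^n) ∘ (fun m : ℕ => 2*m))
        = fun m : ℕ => f m * 2 / 2^(2*k) := by
      funext m
      simp only [Function.comp_apply, hf]
      rw [show ((-1:ℝ))^(2*m) = 1 by rw [pow_mul, neg_one_sq, one_pow], mul_one]
      rw [show ((2*m : ℕ) : ℝ) = 2*(m:ℝ) by push_cast; ring, mul_pow]
      rcases Nat.eq_zero_or_pos m with rfl | hm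
      · simp [zero_pow (by omega : 2*k ≠ 0)]
      · have hm' : ((m:ℝ))^(2*k) ≠ 0 := by positivity
        field_simp
        ring
    have h2 : HasSum (fun n : ℕ => f n + f n * (-1:ℝ)^n) (Z * 2 / 2^(2*k)) := by
      rw [← hinj.hasSum_iff hvanish, hcomp]
      exact hdouble
    exact hadd.unique h2
  have he : (2:ℝ)^((1:ℤ)-2*k) = 2/2^(2*k) := by
    rw [show ((1:ℤ)-2*k) = 1 - ((2*k : ℕ) : ℤ) by push_cast; ring,
      zpow_sub₀ (two_ne_zero), zpow_one, zpow_natCast]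
  have hepos : (2:ℝ)^((1:ℤ)-2*k) ≤ 1/2 := by
    rw [he]
    rw [div_le_div_iff₀ (by positivity) (by norm_num), one_mul]
    calc (2:ℝ)*2 = 2^2 := by norm_num
      _ ≤ 2^(2*k) := pow_le_pow_right₀ one_le_two (by omega)
  refine ⟨Z / c, by positivity, ?_, ?_⟩
  · intro x hx
    rw [le_div_iff₀ hcpos, mul_comm]
    exact habs x hx
  · have hAval : A = -(1 - 2/2^(2*k)) * Z := by
      have h2k : (2:ℝ)^(2*k) ≠ 0 := by positivity
      field_simp at hZA ⊢
      linarith [hZA]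
    have : c * |bernoulliFun (2*k) (1/2)| = |A| := by
      rw [hAdef, abs_mul, abs_pow, abs_neg, abs_one, one_pow, one_mul, abs_mul,
        abs_of_pos hcpos]
    rw [hAval] at this
    rw [abs_mul, abs_neg] at this
    have h1e : (0:ℝ) < 1 - 2/2^(2*k) := by
      rw [← he]; linarith
    rw [abs_of_pos h1e, abs_of_pos (by linarith : (0:ℝ) < Z)] at this
    have : |bernoulliFun (2*k) (1/2)| = (1 - 2/2^(2*k)) * Z / c := by
      field_simp at this ⊢
      linarith [this]
    rw [this, he]
    ring



theorem abs_Rtildenext_lt_eta_sqrt_pi_k_mul (k : ℕ) (hk : 1 ≤ k) (t : ℝ) (ht : 0 < t) :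
    |Rtildenext k t| < eta k * Real.sqrt (π * k) * Ttilde k t := by
  obtain ⟨S, hSpos, hbound, hhalf⟩ := bern_bound_and_half k hk
  have hk1 : (1:ℝ) ≤ (k:ℝ) := by exact_mod_cast hk
  have h2k1 : (0:ℝ) < 2*(k:ℝ)-1 := by linarith
  have htpow : (0:ℝ) < t^(2*k-1) := by positivity
  have haeval : ∀ y : ℝ, (Polynomial.aeval y (Polynomial.bernoulli (2*k)) : ℝ)
      = bernoulliFun (2*k) y := by
    intro y
    rw [bernoulliFun, Polynomial.eval_map, Polynomial.aeval_def]
  have hnorm : ∀ u : ℝ,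
      ‖((Polynomial.aeval (Int.fract (u + 1/2)) (Polynomial.bernoulli (2*k)) : ℝ) : ℂ) /
        ((4*(k:ℂ)) * ((u:ℂ) + Complex.I * t)^(2*k))‖
      ≤ S/(4*(k:ℝ)) * (((u^2+t^2)^k)⁻¹) := by
    intro u
    rw [norm_div, norm_mul, norm_pow]
    have h1 : ‖((Polynomial.aeval (Int.fract (u + 1/2)) (Polynomial.bernoulli (2*k)) : ℝ) : ℂ)‖
        = |bernoulliFun (2*k) (Int.fract (u + 1/2))| := by
      rw [Complex.norm_real, Real.norm_eq_abs, haeval]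
    have h2 : ‖(4*(k:ℂ))‖ = 4*(k:ℝ) := by
      rw [show (4*(k:ℂ)) = (((4*(k:ℝ)):ℝ):ℂ) by push_cast; ring, Complex.norm_real,
        Real.norm_eq_abs, abs_of_pos (by positivity)]
    have h3 : ‖(u:ℂ) + Complex.I*(t:ℂ)‖^(2*k) = (u^2+t^2)^k := by
      rw [mul_comm Complex.I, Complex.norm_add_mul_I, pow_mul,
        Real.sq_sqrt (by positivity)]
    rw [h1, h2, h3]
    have hb : |bernoulliFun (2*k) (Int.fract (u + 1/2))| ≤ S :=
      hbound _ ⟨Int.fract_nonneg _, (Int.fract_lt_one _).le⟩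
    have hX : ((u^2+t^2)^k : ℝ) ≠ 0 := by positivity
    have hK : (4*(k:ℝ)) ≠ 0 := by positivity
    have hpos : (0:ℝ) < 4*(k:ℝ) * (u^2+t^2)^k := by positivity
    calc |bernoulliFun (2*k) (Int.fract (u + 1/2))| / (4*(k:ℝ) * (u^2+t^2)^k)
        ≤ S / (4*(k:ℝ) * (u^2+t^2)^k) := by gcongr
      _ = S/(4*(k:ℝ)) * (((u^2+t^2)^k)⁻¹) := by field_simp
  have h0 : |Rtildenext k t| ≤ ‖∫ u in Ioi (0:ℝ),
      ((Polynomial.aeval (Int.fract (u + 1/2)) (Polynomial.bernoulli (2*k)) : ℝ) : ℂ) /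
        ((4*(k:ℂ)) * ((u:ℂ) + Complex.I * t)^(2*k))‖ := by
    unfold Rtildenext
    rw [Complex.neg_im, abs_neg]
    exact Complex.abs_im_le_norm _
  have hstep1 : |Rtildenext k t| ≤ ∫ u in Ioi (0:ℝ), S/(4*(k:ℝ)) * (((u^2+t^2)^k)⁻¹) := by
    refine h0.trans ((norm_integral_le_integral_norm _).trans ?_)
    exact integral_mono_of_nonneg (Filter.Eventually.of_forall fun u => norm_nonneg _)
      ((gt_int k hk t ht).const_mul _) (Filter.Eventually.of_forall hnorm)
  rw [MeasureTheory.integral_const_mul, g_scaled k hk t ht] at hstep1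
  have hkey := key_ineq k hk
  have ht2k : t^(2*k) = t^(2*k-1) * t := by
    rw [← pow_succ]
    congr 1
    omega
  have hfinal : S/(4*(k:ℝ)) * ((π/2 * Pw (k-1)) * t / t^(2*k))
      = S/(4*(k:ℝ)*t^(2*k-1)*(2*(k:ℝ)-1)) * ((2*(k:ℝ)-1) * (π/2 * Pw (k-1))) := by
    rw [ht2k]
    have hK : (4*(k:ℝ)) ≠ 0 := by positivity
    have h2k1' : (2*(k:ℝ)-1) ≠ 0 := h2k1.ne'
    field_simp
    rw [mul_div_cancel_right₀ _ (ne_of_gt (by linarith) : (k:ℝ)*2-1 ≠ 0)]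
  have hlt : S/(4*(k:ℝ)*t^(2*k-1)*(2*(k:ℝ)-1)) * ((2*(k:ℝ)-1) * (π/2 * Pw (k-1)))
      < S/(4*(k:ℝ)*t^(2*k-1)*(2*(k:ℝ)-1)) * Real.sqrt (π*k) :=
    mul_lt_mul_of_pos_left hkey (by positivity)
  have hrhs : S/(4*(k:ℝ)*t^(2*k-1)*(2*(k:ℝ)-1)) * Real.sqrt (π*k)
      = eta k * Real.sqrt (π*k) * Ttilde k t := by
    have he2 : (2:ℝ)^((1:ℤ)-2*k) ≤ (2:ℝ)^(-1:ℤ) := zpow_le_zpow_right₀ one_le_two (by omega)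
    have he3 : ((2:ℝ)^(-1:ℤ) : ℝ) = 1/2 := by norm_num
    have h1e : (0:ℝ) < 1 - (2:ℝ)^((1:ℤ)-2*k) := by rw [he3] at he2; linarith
    have hE : (1 - (2:ℝ)^((1:ℤ)-2*k)) ≠ 0 := h1e.ne'
    have hK : (4*(k:ℝ)) ≠ 0 := by positivity
    rw [eta, Ttilde, haeval, hhalf]
    field_simp
  have hfin := (hstep1.trans_eq hfinal).trans_lt hlt
  rwa [hrhs] at hfin
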